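/- Let r be an infinite regular cardinal, A : S_r^op ⥤ 𝒜 an algebraic theory of presentation rank r, and X a set. For every object A^m of 𝒜 (m an object of S_r), the relation R_m on the set of triples (n, ω, x) with n an object of S_r, ω : Aⁿ ⟶ A^m a morphism of 𝒜, and x ∈ X^n, defined by: (n, ω, x) R_m (n', ω', x') iff there exist maps φ : n → n̄ and ψ : n' → n̄ in S_r and x̄ ∈ X^{n̄} with x̄ ∘ φ = x, x̄ ∘ ψ = x', and ω ∘ A(φ) = ω' ∘ A(ψ) as morphisms A^{n̄} ⟶ A^m (where φ and ψ are regarded as morphisms n̄ ⟶ n and n̄ ⟶ n' of S_r^op), is an equivalence relation, and there is a bijection (Lan_A X^(−))(A^m) ≅ (∐_{n} 𝒜(Aⁿ, A^m) × Xⁿ) / R_m. -/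

import Mathlib

/-!
STATEMENT 6: Let `r` be an infinite regular cardinal, `A : S_r^op ⥤ 𝒜` an algebraic theory
of presentation rank `r`, and `X` a set. For every object `A^m` of `𝒜`, the relation `R_m`
on triples `(n, ω : Aⁿ ⟶ A^m, x ∈ X^n)` given by a common refinement `(φ, ψ, x̄)` is an
equivalence relation, and `(Lan_A X^(−))(A^m) ≅ (∐ₙ 𝒜(Aⁿ, A^m) × Xⁿ)/R_m`.

We model `S_r` as a small skeletal category `S` with an equivalence `e` to the full
subcategory of `Type u` on types of cardinality `< r`.
-/

open CategoryTheory CategoryTheory.Limits Opposite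

universe u

/-- The power functor `X^(−) : S_r^op ⥤ Set`, `m ↦ X^m`. -/
@[simps]
def powerFunctor {r : Cardinal.{u}} {S : Type u} [SmallCategory S]
    (e : S ≌ ObjectProperty.FullSubcategory (fun α : Type u => Cardinal.mk α < r))
    (X : Type u) : Sᵒᵖ ⥤ Type u where
  obj m := (e.functor.obj m.unop).obj → X
  map f := TypeCat.ofHom (fun x => x ∘ (e.functor.map f.unop).hom)
  map_id m := by
    ext x y
    show (x ∘ (e.functor.map (𝟙 m.unop)).hom) y = x y
    rw [CategoryTheory.Functor.map_id]
    rfl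
  map_comp f g := by
    ext x y
    show (x ∘ (e.functor.map (g.unop ≫ f.unop)).hom) y = ((x ∘ (e.functor.map f.unop).hom) ∘ (e.functor.map g.unop).hom) y
    rw [CategoryTheory.Functor.map_comp]
    rfl

/-- Volger's relation `R_m` on the set of triples `(n, ω : Aⁿ ⟶ A^m, x : n → X)`:
`(n, ω, x) R_m (n', ω', x')` iff there are `φ : n → n̄`, `ψ : n' → n̄` in `S_r` and
`x̄ ∈ X^n̄` with `x̄ ∘ φ = x`, `x̄ ∘ ψ = x'` and `ω ∘ A(φ) = ω' ∘ A(ψ)`. -/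
def VolgerRel {r : Cardinal.{u}} {S : Type u} [SmallCategory S]
    (e : S ≌ ObjectProperty.FullSubcategory (fun α : Type u => Cardinal.mk α < r))
    {𝒜 : Type u} [SmallCategory 𝒜] (A : Sᵒᵖ ⥤ 𝒜) (X : Type u) (m : S) :
    (Σ n : S, (A.obj (op n) ⟶ A.obj (op m)) × ((e.functor.obj n).obj → X)) →
      (Σ n : S, (A.obj (op n) ⟶ A.obj (op m)) × ((e.functor.obj n).obj → X)) → Prop :=
  fun p q =>
    ∃ (nbar : S) (φ : p.1 ⟶ nbar) (ψ : q.1 ⟶ nbar)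
      (xbar : (e.functor.obj nbar).obj → X),
        xbar ∘ (e.functor.map φ).hom = p.2.2 ∧ xbar ∘ (e.functor.map ψ).hom = q.2.2 ∧
          A.map φ.op ≫ p.2.1 = A.map ψ.op ≫ q.2.1

theorem statement6 (r : Cardinal.{u}) (hr : r.IsRegular)
    (S : Type u) [SmallCategory S] (hskel : CategoryTheory.Skeletal S)
    (e : S ≌ ObjectProperty.FullSubcategory (fun α : Type u => Cardinal.mk α < r))
    (𝒜 : Type u) [SmallCategory 𝒜] (A : Sᵒᵖ ⥤ 𝒜)
    (hbij : Function.Bijective A.obj)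
    (hA : ∀ J : Type u, Cardinal.mk J < r → PreservesLimitsOfShape (Discrete J) A)
    (X : Type u) (m : S) :
    Equivalence (VolgerRel e A X m) ∧
      Nonempty
        ((A.pointwiseLeftKanExtension (powerFunctor e X)).obj (A.obj (op m)) ≃
          Quot (VolgerRel e A X m)) := by
  -- Abbreviations
  have hr0 : Cardinal.aleph0 ≤ r := hr.aleph0_le
  -- Part 1: equivalence relation
  have hrefl : ∀ p, VolgerRel e A X m p p := by
    intro p
    refine ⟨p.1, 𝟙 p.1, 𝟙 p.1, p.2.2, ?_, ?_, rfl⟩ <;>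
      · rw [CategoryTheory.Functor.map_id]; rfl
  have hsymm : ∀ {p q}, VolgerRel e A X m p q → VolgerRel e A X m q p := by
    rintro p q ⟨nbar, φ, ψ, xbar, h1, h2, h3⟩
    exact ⟨nbar, ψ, φ, xbar, h2, h1, h3.symm⟩
  have htrans : ∀ {p q s}, VolgerRel e A X m p q → VolgerRel e A X m q s →
      VolgerRel e A X m p s := by
    rintro p q s ⟨n1, φ1, ψ1, x1, hx1p, hx1q, hA1⟩ ⟨n2, φ2, ψ2, x2, hx2q, hx2s, hA2⟩
    -- pushout of `e.functor.map ψ1` and `e.functor.map φ2` in `Type u`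
    set Rel : ((e.functor.obj n1).obj ⊕ (e.functor.obj n2).obj) →
        ((e.functor.obj n1).obj ⊕ (e.functor.obj n2).obj) → Prop :=
      fun a b => ∃ c, a = Sum.inl (e.functor.map ψ1 c) ∧ b = Sum.inr (e.functor.map φ2 c)
      with hRel
    set P := Quot Rel with hPdef
    have hP : Cardinal.mk P < r := by
      refine lt_of_le_of_lt Cardinal.mk_quot_le ?_
      rw [Cardinal.mk_sum]
      simpa using Cardinal.add_lt_of_lt hr0 (e.functor.obj n1).property
        (e.functor.obj n2).property
    set Pobj : ObjectProperty.FullSubcategory (fun α : Type u => Cardinal.mk α < r) := ⟨P, hP⟩ with hPobj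
    set nbar := e.inverse.obj Pobj with hnbar
    set j : Pobj ⟶ e.functor.obj nbar := e.counitIso.inv.app Pobj with hj
    set i1 : (e.functor.obj n1).obj → P := fun a => Quot.mk Rel (Sum.inl a) with hi1
    set i2 : (e.functor.obj n2).obj → P := fun a => Quot.mk Rel (Sum.inr a) with hi2
    set u : n1 ⟶ nbar :=
      e.functor.preimage (show e.functor.obj n1 ⟶ e.functor.obj nbar from ObjectProperty.homMk (TypeCat.ofHom (j ∘ i1))) with hudef
    set v : n2 ⟶ nbar :=
      e.functor.preimage (show e.functor.obj n2 ⟶ e.functor.obj nbar from ObjectProperty.homMk (TypeCat.ofHom (j ∘ i2))) with hvdef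
    have hu : e.functor.map u =
        (show e.functor.obj n1 ⟶ e.functor.obj nbar from ObjectProperty.homMk (TypeCat.ofHom (j ∘ i1))) :=
      e.functor.map_preimage _
    have hv : e.functor.map v =
        (show e.functor.obj n2 ⟶ e.functor.obj nbar from ObjectProperty.homMk (TypeCat.ofHom (j ∘ i2))) :=
      e.functor.map_preimage _
    have hcomm : ψ1 ≫ u = φ2 ≫ v := by
      apply e.functor.map_injective
      rw [Functor.map_comp, Functor.map_comp, hu, hv]
      ext c
      exact congrArg j (Quot.sound ⟨c, rfl, rfl⟩)
    -- the function on the pushout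
    have hglue : ∀ a b, Rel a b → Sum.elim x1 x2 a = Sum.elim x1 x2 b := by
      rintro a b ⟨c, rfl, rfl⟩
      exact (congrFun hx1q c).trans (congrFun hx2q c).symm
    set xbar0 : P → X := Quot.lift (Sum.elim x1 x2) hglue with hxbar0
    set xbar : (e.functor.obj nbar).obj → X :=
      xbar0 ∘ (e.counitIso.hom.app Pobj) with hxbar
    have hjinv : ∀ pp : P, (e.counitIso.hom.app Pobj) (j pp) = pp := by
      intro pp
      exact congrArg (fun f : Pobj ⟶ Pobj => f pp) (e.counitIso.inv_hom_id_app Pobj)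
    refine ⟨nbar, φ1 ≫ u, ψ2 ≫ v, xbar, ?_, ?_, ?_⟩
    · funext a
      have h1 : e.functor.map (φ1 ≫ u) a = j (i1 (e.functor.map φ1 a)) := by
        have hcompu : e.functor.map (φ1 ≫ u) =
            (show (e.functor.obj p.1 ⟶ e.functor.obj nbar) from
              ObjectProperty.homMk (TypeCat.ofHom fun b => j (i1 (e.functor.map φ1 b)))) := by
          rw [Functor.map_comp, hu]; rfl
        exact congrArg (fun f : e.functor.obj p.1 ⟶ e.functor.obj nbar =>
          (f : (e.functor.obj p.1).obj → (e.functor.obj nbar).obj) a) hcompu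
      show xbar (e.functor.map (φ1 ≫ u) a) = p.2.2 a
      rw [h1]
      show xbar0 ((e.counitIso.hom.app Pobj) (j (i1 (e.functor.map φ1 a)))) = p.2.2 a
      rw [hjinv]
      exact congrFun hx1p a
    · funext a
      have h1 : e.functor.map (ψ2 ≫ v) a = j (i2 (e.functor.map ψ2 a)) := by
        have hcompv : e.functor.map (ψ2 ≫ v) =
            (show (e.functor.obj s.1 ⟶ e.functor.obj nbar) from
              ObjectProperty.homMk (TypeCat.ofHom fun b => j (i2 (e.functor.map ψ2 b)))) := by
          rw [Functor.map_comp, hv]; rfl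
        exact congrArg (fun f : e.functor.obj s.1 ⟶ e.functor.obj nbar =>
          (f : (e.functor.obj s.1).obj → (e.functor.obj nbar).obj) a) hcompv
      show xbar (e.functor.map (ψ2 ≫ v) a) = s.2.2 a
      rw [h1]
      show xbar0 ((e.counitIso.hom.app Pobj) (j (i2 (e.functor.map ψ2 a)))) = s.2.2 a
      rw [hjinv]
      exact congrFun hx2s a
    · have key : A.map (ψ1 ≫ u).op ≫ q.2.1 = A.map (φ2 ≫ v).op ≫ q.2.1 := by
        rw [hcomm]
      calc A.map (φ1 ≫ u).op ≫ p.2.1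
          = A.map u.op ≫ A.map φ1.op ≫ p.2.1 := by
            rw [op_comp, Functor.map_comp, Category.assoc]
        _ = A.map u.op ≫ A.map ψ1.op ≫ q.2.1 := by rw [hA1]
        _ = A.map (ψ1 ≫ u).op ≫ q.2.1 := by
            rw [op_comp, Functor.map_comp, Category.assoc]
        _ = A.map (φ2 ≫ v).op ≫ q.2.1 := key
        _ = A.map v.op ≫ A.map φ2.op ≫ q.2.1 := by
            rw [op_comp, Functor.map_comp, Category.assoc]
        _ = A.map v.op ≫ A.map ψ2.op ≫ s.2.1 := by rw [hA2]
        _ = A.map (ψ2 ≫ v).op ≫ s.2.1 := by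
            rw [op_comp, Functor.map_comp, Category.assoc]
  refine ⟨⟨hrefl, hsymm, htrans⟩, ?_⟩
  -- Part 2: the bijection
  set F := CostructuredArrow.proj A (A.obj (op m)) ⋙ powerFunctor e X with hF
  haveI : Small.{u} F.ColimitType :=
    CategoryTheory.Limits.Types.small_colimitType_of_hasColimit F
  have e1 : (A.pointwiseLeftKanExtension (powerFunctor e X)).obj (A.obj (op m)) ≃
      Quot (F.ColimitTypeRel) :=
    Types.colimitEquivColimitType F
  -- now the comparison of quotients
  have stepTo : ∀ (jx jy : Σ jj : CostructuredArrow A (A.obj (op m)), F.obj jj),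
      F.ColimitTypeRel jx jy →
      VolgerRel e A X m ⟨jx.1.left.unop, jx.1.hom, jx.2⟩ ⟨jy.1.left.unop, jy.1.hom, jy.2⟩ := by
    rintro jx jy ⟨f, hf⟩
    refine ⟨jx.1.left.unop, 𝟙 _, f.left.unop, jx.2, ?_, ?_, ?_⟩
    · funext a; rw [CategoryTheory.Functor.map_id]; rfl
    · exact hf.symm
    · have := CostructuredArrow.w f
      show A.map (𝟙 jx.1.left.unop).op ≫ jx.1.hom = A.map f.left.unop.op ≫ jy.1.hom
      rw [op_id, CategoryTheory.Functor.map_id, Category.id_comp]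
      exact this.symm
  set toF : Quot (F.ColimitTypeRel) → Quot (VolgerRel e A X m) :=
    Quot.lift (fun jx => Quot.mk _ ⟨jx.1.left.unop, jx.1.hom, jx.2⟩)
      (fun jx jy h => Quot.sound (stepTo jx jy h)) with htoF
  have invSound : ∀ p q, VolgerRel e A X m p q →
      Quot.mk (F.ColimitTypeRel) ⟨CostructuredArrow.mk p.2.1, p.2.2⟩ =
      Quot.mk (F.ColimitTypeRel) ⟨CostructuredArrow.mk q.2.1, q.2.2⟩ := by
    rintro p q ⟨nbar, φ, ψ, xbar, h1, h2, h3⟩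
    have step1 : Quot.mk (F.ColimitTypeRel)
        (⟨CostructuredArrow.mk (A.map φ.op ≫ p.2.1), xbar⟩ :
          Σ jj : CostructuredArrow A (A.obj (op m)), F.obj jj) =
        Quot.mk (F.ColimitTypeRel) ⟨CostructuredArrow.mk p.2.1, p.2.2⟩ := by
      refine Quot.sound ⟨CostructuredArrow.homMk φ.op rfl, ?_⟩
      exact h1.symm
    have step2 : Quot.mk (F.ColimitTypeRel)
        (⟨CostructuredArrow.mk (A.map φ.op ≫ p.2.1), xbar⟩ :
          Σ jj : CostructuredArrow A (A.obj (op m)), F.obj jj) =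
        Quot.mk (F.ColimitTypeRel) ⟨CostructuredArrow.mk q.2.1, q.2.2⟩ := by
      refine Quot.sound ⟨CostructuredArrow.homMk ψ.op ?_, ?_⟩
      · exact h3.symm
      · exact h2.symm
    exact step1.symm.trans step2
  refine ⟨e1.trans ⟨toF,
    Quot.lift (fun p => Quot.mk (F.ColimitTypeRel) ⟨CostructuredArrow.mk p.2.1, p.2.2⟩)
      invSound, ?_, ?_⟩⟩
  · rintro ⟨⟨jj, x⟩⟩
    rw [htoF]; rfl
  · rintro ⟨⟨n, ω, x⟩⟩
    rw [htoF]; rfl
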